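/- For every x ∈ c00 the sequence (‖x‖_k)_{k∈ℕ} of Tsirelson iterates is nondecreasing and bounded above by ‖x‖_{ℓ1}, hence ‖x‖_T := lim_{k→∞} ‖x‖_k exists and equals sup_k ‖x‖_k; moreover the function ‖·‖_T so defined is a norm on c00 satisfying ‖x‖_0 ≤ ‖x‖_T ≤ ‖x‖_{ℓ1} for all x ∈ c00. -/
import Mathlib

/-- The ℓ¹-norm on `c00 = ℕ →₀ ℝ`. -/
noncomputable def l1 (x : ℕ →₀ ℝ) : ℝ := ∑ n ∈ x.support, |x n|

/-- `restr E x = Ex`, the restriction of `x` to the finite set `E`. -/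
noncomputable def restr (E : Finset ℕ) (x : ℕ →₀ ℝ) : ℕ →₀ ℝ :=
  x.filter (fun n => n ∈ E)

/-- `Admissible n Es` says that `E_1, …, E_n` are finite nonempty subsets of ℕ
with `n ≤ E_1 < E_2 < ⋯ < E_n`. -/
def Admissible (n : ℕ) (Es : Fin n → Finset ℕ) : Prop :=
  0 < n ∧ (∀ i, (Es i).Nonempty) ∧
    (∀ i : Fin n, ∀ a ∈ Es i, n ≤ a) ∧
    (∀ i j : Fin n, i < j → ∀ a ∈ Es i, ∀ b ∈ Es j, a < b)

/-- The Tsirelson iterate norms `‖·‖_k`. -/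
noncomputable def tsir : ℕ → (ℕ →₀ ℝ) → ℝ
  | 0, x => ⨆ n, |x n|
  | (k + 1), x => max (tsir k x)
      (sSup { r : ℝ | ∃ n : ℕ, ∃ Es : Fin n → Finset ℕ, Admissible n Es ∧
        r = (1 / 2) * ∑ i, tsir k (restr (Es i) x) })

/-- The Tsirelson norm `‖x‖_T = sup_k ‖x‖_k`. -/
noncomputable def tsirT (x : ℕ →₀ ℝ) : ℝ := ⨆ k, tsir k x

/- ### Auxiliary lemmas -/

def Sset (k : ℕ) (x : ℕ →₀ ℝ) : Set ℝ :=
  { r : ℝ | ∃ n : ℕ, ∃ Es : Fin n → Finset ℕ, Admissible n Es ∧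
      r = (1 / 2) * ∑ i, tsir k (restr (Es i) x) }

lemma tsir_succ (k : ℕ) (x : ℕ →₀ ℝ) :
    tsir (k + 1) x = max (tsir k x) (sSup (Sset k x)) := rfl

lemma l1_nonneg (x : ℕ →₀ ℝ) : 0 ≤ l1 x :=
  Finset.sum_nonneg fun _ _ => abs_nonneg _

lemma abs_apply_le_l1 (x : ℕ →₀ ℝ) (n : ℕ) : |x n| ≤ l1 x := by
  by_cases h : n ∈ x.support
  · exact Finset.single_le_sum (fun m _ => abs_nonneg (x m)) h
  · simp only [Finsupp.notMem_support_iff] at h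
    simp [h, l1_nonneg x]

lemma bdd0 (x : ℕ →₀ ℝ) : BddAbove (Set.range fun n => |x n|) :=
  ⟨l1 x, by rintro r ⟨n, rfl⟩; exact abs_apply_le_l1 x n⟩

lemma tsir_zero_le_l1 (x : ℕ →₀ ℝ) : tsir 0 x ≤ l1 x :=
  ciSup_le fun n => abs_apply_le_l1 x n

lemma tsir_nonneg (k : ℕ) (x : ℕ →₀ ℝ) : 0 ≤ tsir k x := by
  induction k with
  | zero => exact Real.iSup_nonneg fun n => abs_nonneg _
  | succ k ih => exact le_trans ih (le_max_left _ _)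

lemma l1_restr_eq (E : Finset ℕ) (x : ℕ →₀ ℝ) :
    l1 (restr E x) = ∑ m ∈ x.support.filter (· ∈ E), |x m| := by
  unfold l1 restr
  rw [Finsupp.support_filter]
  refine Finset.sum_congr rfl fun m hm => ?_
  rw [Finset.mem_filter] at hm
  rw [Finsupp.filter_apply_pos _ _ hm.2]

lemma l1_restr_le (E : Finset ℕ) (x : ℕ →₀ ℝ) : l1 (restr E x) ≤ l1 x := by
  rw [l1_restr_eq]
  exact Finset.sum_le_sum_of_subset_of_nonneg (Finset.filter_subset _ _)
    fun m _ _ => abs_nonneg _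

lemma sum_l1_restr_le (x : ℕ →₀ ℝ) {n : ℕ} {Es : Fin n → Finset ℕ}
    (h : Admissible n Es) : ∑ i, l1 (restr (Es i) x) ≤ l1 x := by
  have hdisj : ∀ i ∈ (Finset.univ : Finset (Fin n)), ∀ j ∈ Finset.univ, i ≠ j →
      Disjoint (x.support.filter (· ∈ Es i)) (x.support.filter (· ∈ Es j)) := by
    intro i _ j _ hij
    rw [Finset.disjoint_left]
    intro a hai haj
    rw [Finset.mem_filter] at hai haj
    rcases lt_or_gt_of_ne hij with hlt | hlt
    · exact absurd (h.2.2.2 i j hlt a hai.2 a haj.2) (lt_irrefl a)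
    · exact absurd (h.2.2.2 j i hlt a haj.2 a hai.2) (lt_irrefl a)
  calc ∑ i, l1 (restr (Es i) x)
      = ∑ i, ∑ m ∈ x.support.filter (· ∈ Es i), |x m| := by
        simp_rw [l1_restr_eq]
    _ = ∑ m ∈ Finset.univ.biUnion (fun i => x.support.filter (· ∈ Es i)), |x m| :=
        (Finset.sum_biUnion hdisj).symm
    _ ≤ l1 x := Finset.sum_le_sum_of_subset_of_nonneg
        (by intro m hm; rw [Finset.mem_biUnion] at hm; obtain ⟨i, _, hmi⟩ := hm
            exact (Finset.mem_filter.mp hmi).1)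
        fun m _ _ => abs_nonneg _

lemma tsir_le_l1 (k : ℕ) : ∀ x : ℕ →₀ ℝ, tsir k x ≤ l1 x := by
  induction k with
  | zero => exact tsir_zero_le_l1
  | succ k ih =>
    intro x
    rw [tsir_succ]
    refine max_le (ih x) (Real.sSup_le ?_ (l1_nonneg x))
    rintro r ⟨n, Es, hadm, rfl⟩
    calc (1 / 2 : ℝ) * ∑ i, tsir k (restr (Es i) x)
        ≤ (1 / 2) * ∑ i, l1 (restr (Es i) x) := by
          refine mul_le_mul_of_nonneg_left (Finset.sum_le_sum fun i _ => ih _) (by norm_num)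
      _ ≤ (1 / 2) * l1 x := mul_le_mul_of_nonneg_left (sum_l1_restr_le x hadm) (by norm_num)
      _ ≤ l1 x := by linarith [l1_nonneg x]

lemma mem_Sset_le (k : ℕ) (x : ℕ →₀ ℝ) {r : ℝ} (hr : r ∈ Sset k x) : r ≤ l1 x := by
  obtain ⟨n, Es, hadm, rfl⟩ := hr
  calc (1 / 2 : ℝ) * ∑ i, tsir k (restr (Es i) x)
      ≤ (1 / 2) * ∑ i, l1 (restr (Es i) x) :=
        mul_le_mul_of_nonneg_left (Finset.sum_le_sum fun i _ => tsir_le_l1 k _) (by norm_num)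
    _ ≤ (1 / 2) * l1 x := mul_le_mul_of_nonneg_left (sum_l1_restr_le x hadm) (by norm_num)
    _ ≤ l1 x := by linarith [l1_nonneg x]

lemma Sset_bddAbove (k : ℕ) (x : ℕ →₀ ℝ) : BddAbove (Sset k x) :=
  ⟨l1 x, fun r hr => mem_Sset_le k x hr⟩

lemma tsir_mono (x : ℕ →₀ ℝ) : Monotone fun k => tsir k x :=
  monotone_nat_of_le_succ fun k => le_max_left _ _

lemma tsir_range_bdd (x : ℕ →₀ ℝ) : BddAbove (Set.range fun k => tsir k x) :=
  ⟨l1 x, by rintro r ⟨k, rfl⟩; exact tsir_le_l1 k x⟩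

lemma tsir_le_tsirT (k : ℕ) (x : ℕ →₀ ℝ) : tsir k x ≤ tsirT x :=
  le_ciSup (tsir_range_bdd x) k

lemma tsirT_le_l1 (x : ℕ →₀ ℝ) : tsirT x ≤ l1 x :=
  ciSup_le fun k => tsir_le_l1 k x

lemma restr_smul (E : Finset ℕ) (c : ℝ) (x : ℕ →₀ ℝ) :
    restr E (c • x) = c • restr E x := by
  ext n
  simp [restr, Finsupp.filter_apply]

lemma restr_add (E : Finset ℕ) (x y : ℕ →₀ ℝ) :
    restr E (x + y) = restr E x + restr E y := by
  ext n
  simp [restr, Finsupp.filter_apply]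

lemma tsir_le_succ (k : ℕ) (x : ℕ →₀ ℝ) : tsir k x ≤ tsir (k + 1) x :=
  le_max_left _ _

lemma sSup_Sset_le (k : ℕ) (x : ℕ →₀ ℝ) : sSup (Sset k x) ≤ tsir (k + 1) x := by
  rw [tsir_succ]; exact le_max_right _ _

lemma tsir_smul_le (k : ℕ) (c : ℝ) : ∀ x : ℕ →₀ ℝ, tsir k (c • x) ≤ |c| * tsir k x := by
  induction k with
  | zero =>
    intro x
    refine ciSup_le fun n => ?_
    rw [Finsupp.smul_apply, smul_eq_mul, abs_mul]
    exact mul_le_mul_of_nonneg_left (le_ciSup (bdd0 x) n) (abs_nonneg c)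
  | succ k ih =>
    intro x
    refine le_trans (le_of_eq (tsir_succ k (c • x))) (max_le ?_ ?_)
    · exact le_trans (ih x) (mul_le_mul_of_nonneg_left (tsir_le_succ k x) (abs_nonneg c))
    · refine Real.sSup_le ?_ (mul_nonneg (abs_nonneg c) (tsir_nonneg _ x))
      rintro r ⟨n, Es, hadm, rfl⟩
      have h1 : (1 / 2 : ℝ) * ∑ i, tsir k (restr (Es i) (c • x))
          ≤ |c| * ((1 / 2) * ∑ i, tsir k (restr (Es i) x)) := by
        have hs : ∑ i, tsir k (restr (Es i) (c • x)) ≤ ∑ i, |c| * tsir k (restr (Es i) x) :=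
          Finset.sum_le_sum fun i _ => by rw [restr_smul]; exact ih _
        calc (1 / 2 : ℝ) * ∑ i, tsir k (restr (Es i) (c • x))
            ≤ (1 / 2) * ∑ i, |c| * tsir k (restr (Es i) x) :=
              mul_le_mul_of_nonneg_left hs (by norm_num)
          _ = |c| * ((1 / 2) * ∑ i, tsir k (restr (Es i) x)) := by
              rw [← Finset.mul_sum]; ring
      refine le_trans h1 (mul_le_mul_of_nonneg_left ?_ (abs_nonneg c))
      exact le_trans (le_csSup (Sset_bddAbove k x) ⟨n, Es, hadm, rfl⟩) (sSup_Sset_le k x)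

lemma tsir_zero (k : ℕ) : tsir k (0 : ℕ →₀ ℝ) = 0 := by
  have h := tsir_smul_le k 0 0
  rw [zero_smul, abs_zero, zero_mul] at h
  exact le_antisymm h (tsir_nonneg k 0)

lemma tsir_smul (k : ℕ) (c : ℝ) (x : ℕ →₀ ℝ) : tsir k (c • x) = |c| * tsir k x := by
  rcases eq_or_ne c 0 with rfl | hc
  · simp [tsir_zero]
  · refine le_antisymm (tsir_smul_le k c x) ?_
    have h := tsir_smul_le k c⁻¹ (c • x)
    rw [inv_smul_smul₀ hc] at h
    have := mul_le_mul_of_nonneg_left h (abs_nonneg c)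
    rwa [← mul_assoc, abs_inv, mul_inv_cancel₀ (abs_ne_zero.mpr hc), one_mul] at this

lemma tsir_add (k : ℕ) : ∀ x y : ℕ →₀ ℝ, tsir k (x + y) ≤ tsir k x + tsir k y := by
  induction k with
  | zero =>
    intro x y
    refine ciSup_le fun n => ?_
    rw [Finsupp.add_apply]
    exact le_trans (abs_add_le _ _)
      (add_le_add (le_ciSup (bdd0 x) n) (le_ciSup (bdd0 y) n))
  | succ k ih =>
    intro x y
    refine le_trans (le_of_eq (tsir_succ k (x + y))) (max_le ?_ ?_)
    · exact le_trans (ih x y) (add_le_add (tsir_le_succ k x) (tsir_le_succ k y))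
    · refine Real.sSup_le ?_ (add_nonneg (tsir_nonneg _ x) (tsir_nonneg _ y))
      rintro r ⟨n, Es, hadm, rfl⟩
      have h1 : (1 / 2 : ℝ) * ∑ i, tsir k (restr (Es i) (x + y))
          ≤ (1 / 2) * ∑ i, tsir k (restr (Es i) x) + (1 / 2) * ∑ i, tsir k (restr (Es i) y) := by
        rw [← mul_add, ← Finset.sum_add_distrib]
        refine mul_le_mul_of_nonneg_left (Finset.sum_le_sum fun i _ => ?_) (by norm_num)
        rw [restr_add]
        exact ih _ _
      refine le_trans h1 (add_le_add ?_ ?_)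
      · exact le_trans (le_csSup (Sset_bddAbove k x) ⟨n, Es, hadm, rfl⟩) (sSup_Sset_le k x)
      · exact le_trans (le_csSup (Sset_bddAbove k y) ⟨n, Es, hadm, rfl⟩) (sSup_Sset_le k y)

lemma tsirT_nonneg (x : ℕ →₀ ℝ) : 0 ≤ tsirT x :=
  le_trans (tsir_nonneg 0 x) (tsir_le_tsirT 0 x)

lemma tsirT_smul (c : ℝ) (x : ℕ →₀ ℝ) : tsirT (c • x) = |c| * tsirT x := by
  rcases eq_or_ne c 0 with rfl | hc
  · simp [tsirT, tsir_zero]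
  · have hc' : |c| ≠ 0 := abs_ne_zero.mpr hc
    refine le_antisymm (ciSup_le fun k => ?_) ?_
    · rw [tsir_smul]
      exact mul_le_mul_of_nonneg_left (tsir_le_tsirT k x) (abs_nonneg c)
    · have h2 : tsirT x ≤ |c|⁻¹ * tsirT (c • x) := ciSup_le fun k => by
        have h3 : tsir k x = |c|⁻¹ * tsir k (c • x) := by
          rw [tsir_smul, ← mul_assoc, inv_mul_cancel₀ hc', one_mul]
        rw [h3]
        exact mul_le_mul_of_nonneg_left (tsir_le_tsirT k _) (by positivity)
      calc |c| * tsirT x ≤ |c| * (|c|⁻¹ * tsirT (c • x)) :=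
            mul_le_mul_of_nonneg_left h2 (abs_nonneg c)
        _ = tsirT (c • x) := by rw [← mul_assoc, mul_inv_cancel₀ hc', one_mul]

lemma tsirT_add (x y : ℕ →₀ ℝ) : tsirT (x + y) ≤ tsirT x + tsirT y :=
  ciSup_le fun k => le_trans (tsir_add k x y)
    (add_le_add (tsir_le_tsirT k x) (tsir_le_tsirT k y))

lemma tsirT_eq_zero_iff (x : ℕ →₀ ℝ) : tsirT x = 0 ↔ x = 0 := by
  constructor
  · intro h
    ext n
    have h1 : |x n| ≤ tsir 0 x := le_ciSup (bdd0 x) n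
    have h2 := le_trans h1 (tsir_le_tsirT 0 x)
    rw [h] at h2
    simpa using le_antisymm h2 (abs_nonneg _)
  · rintro rfl
    unfold tsirT
    simp [tsir_zero]

/-- for each `x ∈ c00` the sequence of Tsirelson iterates is nondecreasing
and bounded by `‖x‖_{ℓ1}`, hence converges to `‖x‖_T = sup_k ‖x‖_k`; moreover `‖·‖_T`
is a norm on `c00` with `‖x‖_0 ≤ ‖x‖_T ≤ ‖x‖_{ℓ1}`. -/
theorem tsirT_limit_and_isNorm :
    (∀ x : ℕ →₀ ℝ, (Monotone fun k => tsir k x) ∧ (∀ k, tsir k x ≤ l1 x) ∧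
      Filter.Tendsto (fun k => tsir k x) Filter.atTop (nhds (tsirT x))) ∧
    (∀ x : ℕ →₀ ℝ, 0 ≤ tsirT x) ∧
    (∀ (c : ℝ) (x : ℕ →₀ ℝ), tsirT (c • x) = |c| * tsirT x) ∧
    (∀ x y : ℕ →₀ ℝ, tsirT (x + y) ≤ tsirT x + tsirT y) ∧
    (∀ x : ℕ →₀ ℝ, tsirT x = 0 ↔ x = 0) ∧
    (∀ x : ℕ →₀ ℝ, tsir 0 x ≤ tsirT x ∧ tsirT x ≤ l1 x) := by
  refine ⟨fun x => ⟨tsir_mono x, fun k => tsir_le_l1 k x, ?_⟩,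
    tsirT_nonneg, tsirT_smul, tsirT_add, tsirT_eq_zero_iff,
    fun x => ⟨tsir_le_tsirT 0 x, tsirT_le_l1 x⟩⟩
  exact tendsto_atTop_ciSup (tsir_mono x) (tsir_range_bdd x)
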